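/- arXiv:1811.12468 — 6 statements merged into one kernel-verified Lean document; each statement's English description precedes it below -/
import Mathlib

section
/- Let C_n denote the Catalan numbers and define the sequence (A_n) by A_0 = 1 and A_{n+1} = \sum_{i+j+k=n} C_i C_j C_k. Then for every real x with 0 < x \le 1/4 the series \sum_{n=0}^{\infty} A_n x^n converges and equals (1 - \sqrt{1-4x})^3 / (8 x^2) + 1. -/
/-!
Writing `S(x) = ∑ Cₙ xⁿ`, the Catalan recursion is the Cauchy-product identity `S = 1 + x S²`,
and the recursion defining `A` says that `∑ Aₙ₊₁ xⁿ⁺¹ = x S³`. Convergence up to `x = 1/4`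
comes from the telescoping identity `∑_{n<N} Cₙ / 4ⁿ = 2 - 2 binom(2N, N) / 4ᴺ`, which also
gives `S ≤ 2`; this singles out the root `1 - 2 x S = √(1 - 4x)` of the quadratic, and then
`x S³ = (2 x S)³ / (8 x²)`.
-/

open Finset

theorem sum_range_catalan_mul_catalan (m : ℕ) :
    ∑ j ∈ range (m + 1), catalan j * catalan (m - j) = catalan (m + 1) := by
  rw [catalan_succ, sum_range]

theorem sum_range_catalan_div_four_pow_add (N : ℕ) :
    ∑ n ∈ range N, (catalan n : ℝ) / 4 ^ n + 2 * N.centralBinom / 4 ^ N = 2 := by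
  induction N with
  | zero => norm_num
  | succ N ih =>
    have hC : ((N : ℝ) + 1) * catalan N = N.centralBinom := by
      exact_mod_cast succ_mul_catalan_eq_centralBinom N
    have hB : ((N : ℝ) + 1) * (N + 1).centralBinom = 2 * (2 * N + 1) * N.centralBinom := by
      exact_mod_cast Nat.succ_mul_centralBinom_succ N
    have hstep : (catalan N : ℝ) + (N + 1).centralBinom / 2 = 2 * N.centralBinom := by
      refine mul_left_cancel₀ (by positivity : (N : ℝ) + 1 ≠ 0) ?_
      linear_combination hC + hB / 2
    have hterm : (catalan N : ℝ) / 4 ^ N + 2 * (N + 1).centralBinom / 4 ^ (N + 1)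
        = 2 * N.centralBinom / 4 ^ N := by
      rw [pow_succ]
      field_simp
      linear_combination 4 * hstep
    rw [sum_range_succ]
    linarith

theorem hasSum_sum_range_mul_of_nonneg {f g : ℕ → ℝ} {a b : ℝ} (hf : HasSum f a)
    (hg : HasSum g b) (hf0 : ∀ n, 0 ≤ f n) (hg0 : ∀ n, 0 ≤ g n) :
    HasSum (fun n ↦ ∑ k ∈ range (n + 1), f k * g (n - k)) (a * b) := by
  have hfn : Summable (‖f ·‖) := by simpa only [Real.norm_of_nonneg (hf0 _)] using hf.summable
  have hgn : Summable (‖g ·‖) := by simpa only [Real.norm_of_nonneg (hg0 _)] using hg.summable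
  simpa only [hf.tsum_eq, hg.tsum_eq] using hasSum_sum_range_mul_of_summable_norm hfn hgn

noncomputable def catalanSum (x : ℝ) : ℝ := ∑' n, (catalan n : ℝ) * x ^ n

section CatalanSum

variable {x : ℝ}

theorem sum_range_catalan_mul_pow_le_two (hx0 : 0 ≤ x) (hx : x ≤ 1 / 4) (N : ℕ) :
    ∑ n ∈ range N, (catalan n : ℝ) * x ^ n ≤ 2 := by
  have hpow : ∀ n, (catalan n : ℝ) * x ^ n ≤ (catalan n : ℝ) / 4 ^ n := fun n ↦ by
    rw [div_eq_mul_one_div, ← one_div_pow]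
    gcongr
  have hrest : 0 ≤ 2 * (N.centralBinom : ℝ) / 4 ^ N := by positivity
  linarith [sum_le_sum fun n (_ : n ∈ range N) ↦ hpow n, sum_range_catalan_div_four_pow_add N]

theorem hasSum_catalanSum (hx0 : 0 ≤ x) (hx : x ≤ 1 / 4) :
    HasSum (fun n ↦ (catalan n : ℝ) * x ^ n) (catalanSum x) :=
  (summable_of_sum_range_le (fun _ ↦ by positivity)
    (sum_range_catalan_mul_pow_le_two hx0 hx)).hasSum

theorem catalanSum_le_two (hx0 : 0 ≤ x) (hx : x ≤ 1 / 4) : catalanSum x ≤ 2 :=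
  Real.tsum_le_of_sum_range_le (fun _ ↦ by positivity) (sum_range_catalan_mul_pow_le_two hx0 hx)

theorem hasSum_catalan_succ_mul_pow (hx0 : 0 ≤ x) (hx : x ≤ 1 / 4) :
    HasSum (fun n ↦ (catalan (n + 1) : ℝ) * x ^ n) (catalanSum x ^ 2) := by
  rw [sq]
  convert hasSum_sum_range_mul_of_nonneg (hasSum_catalanSum hx0 hx) (hasSum_catalanSum hx0 hx)
    (fun _ ↦ by positivity) (fun _ ↦ by positivity) using 2 with n
  rw [← sum_range_catalan_mul_catalan, Nat.cast_sum, sum_mul]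
  refine sum_congr rfl fun k hk ↦ ?_
  push_cast
  rw [mul_mul_mul_comm, ← pow_add, Nat.add_sub_cancel' (mem_range_succ_iff.mp hk)]

theorem catalanSum_eq_one_add_mul_sq (hx0 : 0 ≤ x) (hx : x ≤ 1 / 4) :
    catalanSum x = 1 + x * catalanSum x ^ 2 := by
  have hshift : HasSum (fun n ↦ (catalan (n + 1) : ℝ) * x ^ (n + 1)) (x * catalanSum x ^ 2) :=
    ((hasSum_catalan_succ_mul_pow hx0 hx).mul_left x).congr_fun fun n ↦ by ring
  have h := ((hasSum_nat_add_iff (f := fun n ↦ (catalan n : ℝ) * x ^ n) 1).mp hshift).unique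
    (hasSum_catalanSum hx0 hx)
  rw [sum_range_one, catalan_zero, Nat.cast_one, pow_zero, mul_one] at h
  linarith

theorem one_sub_two_mul_catalanSum (hx0 : 0 ≤ x) (hx : x ≤ 1 / 4) :
    1 - 2 * x * catalanSum x = √(1 - 4 * x) := by
  have hsq : (1 - 2 * x * catalanSum x) ^ 2 = 1 - 4 * x := by
    linear_combination (-4 * x) * catalanSum_eq_one_add_mul_sq hx0 hx
  have hnonneg : 0 ≤ 1 - 2 * x * catalanSum x := by
    nlinarith [catalanSum_le_two hx0 hx]
  rw [← hsq, Real.sqrt_sq hnonneg]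

theorem hasSum_sum_catalan_mul_catalan_mul_catalan (hx0 : 0 ≤ x) (hx : x ≤ 1 / 4) :
    HasSum (fun n ↦ ((∑ i ∈ range (n + 1), ∑ j ∈ range (n + 1 - i),
      catalan i * catalan j * catalan (n - i - j) : ℕ) : ℝ) * x ^ n) (catalanSum x ^ 3) := by
  rw [pow_succ']
  convert hasSum_sum_range_mul_of_nonneg (hasSum_catalanSum hx0 hx)
    (hasSum_catalan_succ_mul_pow hx0 hx) (fun _ ↦ by positivity) (fun _ ↦ by positivity)
    using 2 with n
  rw [Nat.cast_sum, sum_mul]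
  refine sum_congr rfl fun i hi ↦ ?_
  have hin : i ≤ n := mem_range_succ_iff.mp hi
  simp_rw [Nat.sub_add_comm hin, mul_assoc, ← mul_sum, sum_range_catalan_mul_catalan]
  have hpow : x ^ n = x ^ i * x ^ (n - i) := by rw [← pow_add, Nat.add_sub_cancel' hin]
  push_cast
  rw [hpow]
  ring

end CatalanSum

theorem stmt0 (A : ℕ → ℕ) (hA0 : A 0 = 1)
    (hA : ∀ n : ℕ, A (n + 1) =
      ∑ i ∈ Finset.range (n + 1), ∑ j ∈ Finset.range (n + 1 - i),
        catalan i * catalan j * catalan (n - i - j))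
    (x : ℝ) (hx0 : 0 < x) (hx : x ≤ 1 / 4) :
    HasSum (fun n : ℕ => (A n : ℝ) * x ^ n)
      ((1 - Real.sqrt (1 - 4 * x)) ^ 3 / (8 * x ^ 2) + 1) := by
  have hshift : HasSum (fun n ↦ (A (n + 1) : ℝ) * x ^ (n + 1)) (x * catalanSum x ^ 3) :=
    ((hasSum_sum_catalan_mul_catalan_mul_catalan hx0.le hx).mul_left x).congr_fun fun n ↦ by
      rw [hA n]; ring
  have hsum := (hasSum_nat_add_iff (f := fun n ↦ (A n : ℝ) * x ^ n) 1).mp hshift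
  rw [sum_range_one, hA0, Nat.cast_one, pow_zero, mul_one] at hsum
  have hval : x * catalanSum x ^ 3 = (1 - √(1 - 4 * x)) ^ 3 / (8 * x ^ 2) := by
    rw [← one_sub_two_mul_catalanSum hx0.le hx]
    field_simp
    ring
  rwa [hval] at hsum
end

section
/- For every \alpha \in [0,1), the function g_\alpha attains its global maximum on [0,1] at a unique point x_0 \in (0,1/2], and x_0 is the unique solution in (0,1/2] of the equation G_\alpha(x_0) = x_0 + 1/2. Moreover, if \alpha > 0 then x_0 is the only critical point of g_\alpha in the open interval (0,1). -/
/-- `g α x` : the expected density after the epidemic stage on a percolated 3-tree. -/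
noncomputable def g (α x : ℝ) : ℝ :=
  if x = 0 then 0
  else (1 - Real.sqrt (1 - 4 * (1 - α) * x * (1 - x))) ^ 3 / (8 * (1 - α) ^ 2 * x ^ 2)

/-- `G α x` : factor in the decomposition `g α x = (1-α) * x * (G α x)^3`. -/
noncomputable def G (α x : ℝ) : ℝ :=
  if x = 0 then 1
  else (1 - Real.sqrt (1 - 4 * (1 - α) * x * (1 - x))) / (2 * (1 - α) * x)

/-!
Write `s = √(disc α x)`. At points of `(0, 1)` where `s > 0`, the derivative of `g α` is a
positive multiple of `quad α x - s`, and `G α x = x + 1/2` is, after clearing the denominator, the equation `s = quad α x`.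
Now `quad² - s² = (1 - α) x · cubic`, where `cubic α` decreases strictly on `[0, 1/2]` from `2` to
`-2α`, and `cubic = 3 (1 - 2x) - (2x + 1) quad` is negative wherever `x > 1/2` and `quad ≥ 0`.
Hence `quad - s` is positive before the root `x₀ ∈ (0, 1/2]` of `cubic α`, zero at `x₀` and negative
after it, so `g α` increases up to `x₀` and decreases from there on.
-/

open Set

noncomputable def disc (α x : ℝ) : ℝ := 1 - 4 * (1 - α) * x * (1 - x)

def quad (α x : ℝ) : ℝ := 1 - (1 - α) * x - 2 * (1 - α) * x ^ 2

def cubic (α x : ℝ) : ℝ := 4 * (1 - α) * x ^ 3 + 4 * (1 - α) * x ^ 2 + (1 - α) * x - 8 * x + 2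

section

variable {α x y x₀ : ℝ}

lemma disc_eq : disc α x = (1 - 2 * x) ^ 2 + 4 * α * x * (1 - x) := by
  unfold disc; ring

lemma quad_sq_sub_disc : quad α x ^ 2 - disc α x = (1 - α) * x * cubic α x := by
  unfold quad disc cubic; ring

lemma cubic_eq : cubic α x = 3 * (1 - 2 * x) - (2 * x + 1) * quad α x := by
  unfold cubic quad; ring

lemma g_of_ne_zero (hx : x ≠ 0) :
    g α x = (1 - √(disc α x)) ^ 3 / (8 * (1 - α) ^ 2 * x ^ 2) := by
  rw [g, if_neg hx, disc]

lemma G_of_ne_zero (hx : x ≠ 0) : G α x = (1 - √(disc α x)) / (2 * (1 - α) * x) := by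
  rw [G, if_neg hx, disc]

lemma disc_pos (hα : 0 ≤ α) (hx : x ∈ Ioo 0 1) (h : 0 < α ∨ x ≠ 1 / 2) : 0 < disc α x := by
  obtain ⟨hx0, hx1⟩ := hx
  have hx1' := sub_pos.2 hx1
  rw [disc_eq]
  rcases h with h | h
  · positivity
  · have : 1 - 2 * x ≠ 0 := fun h0 => h (by linarith)
    positivity

lemma sqrt_disc_lt_one (hα : α < 1) (hx : x ∈ Ioo 0 1) : √(disc α x) < 1 := by
  rw [Real.sqrt_lt' one_pos, disc]
  have := mul_pos (mul_pos (sub_pos.2 hα) hx.1) (sub_pos.2 hx.2)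
  linarith

lemma quad_eq : quad α x = (1 - x * (1 + 2 * x)) + α * (x * (1 + 2 * x)) := by
  unfold quad; ring

lemma quad_nonneg (hα : 0 ≤ α) (hx : x ∈ Icc 0 (1 / 2)) : 0 ≤ quad α x := by
  obtain ⟨hx0, hx1⟩ := hx
  rw [quad_eq]
  have : 0 ≤ x * (1 + 2 * x) := by positivity
  nlinarith

lemma quad_pos (hα : 0 ≤ α) (hx : x ∈ Ico 0 (1 / 2)) : 0 < quad α x := by
  obtain ⟨hx0, hx1⟩ := hx
  rw [quad_eq]
  have : 0 ≤ x * (1 + 2 * x) := by positivity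
  nlinarith

lemma quad_half : quad α (1 / 2) = α := by
  unfold quad; ring

lemma cubic_zero : cubic α 0 = 2 := by
  unfold cubic; ring

lemma cubic_half : cubic α (1 / 2) = -2 * α := by
  unfold cubic; ring

lemma cubic_strictAntiOn (hα : 0 ≤ α) : StrictAntiOn (cubic α) (Icc 0 (1 / 2)) := by
  rintro t ⟨ht0, ht1⟩ u ⟨hu0, hu1⟩ htu
  have hdiff : cubic α t - cubic α u =
      (u - t) * (8 - (1 - α) * (4 * (u ^ 2 + u * t + t ^ 2) + 4 * (u + t) + 1)) := by
    unfold cubic; ring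
  have hX : 4 * (u ^ 2 + u * t + t ^ 2) + 4 * (u + t) + 1 < 8 := by nlinarith
  have hX0 : 0 ≤ 4 * (u ^ 2 + u * t + t ^ 2) + 4 * (u + t) + 1 := by positivity
  have : 0 < (u - t) * (8 - (1 - α) * (4 * (u ^ 2 + u * t + t ^ 2) + 4 * (u + t) + 1)) :=
    mul_pos (sub_pos.2 htu) (by nlinarith)
  linarith

lemma exists_cubic_root (hα : 0 ≤ α) : ∃ x₀ ∈ Ioc 0 (1 / 2), cubic α x₀ = 0 := by
  have hcont : ContinuousOn (cubic α) (Icc 0 (1 / 2)) := by unfold cubic; fun_prop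
  have hmem : (0 : ℝ) ∈ Icc (cubic α (1 / 2)) (cubic α 0) := by
    rw [cubic_zero, cubic_half]; constructor <;> linarith
  obtain ⟨x₀, ⟨hx₀0, hx₀1⟩, hroot⟩ := intermediate_value_Icc' (by norm_num) hcont hmem
  refine ⟨x₀, ⟨hx₀0.lt_of_ne ?_, hx₀1⟩, hroot⟩
  rintro rfl
  norm_num [cubic_zero] at hroot

lemma cubic_pos_of_lt_root (hα : 0 ≤ α) (hx₀ : x₀ ≤ 1 / 2) (hroot : cubic α x₀ = 0)
    (hy : y ∈ Ico 0 x₀) : 0 < cubic α y :=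
  hroot ▸ cubic_strictAntiOn hα ⟨hy.1, by linarith [hy.2]⟩ ⟨hy.1.trans hy.2.le, hx₀⟩ hy.2

lemma cubic_neg_of_root_lt (hα : 0 ≤ α) (hx₀ : x₀ ∈ Icc 0 (1 / 2)) (hroot : cubic α x₀ = 0)
    (hy : x₀ < y) (hq : 0 ≤ quad α y) : cubic α y < 0 := by
  rcases le_or_gt y (1 / 2) with h | h
  · exact hroot ▸ cubic_strictAntiOn hα hx₀ ⟨hx₀.1.trans hy.le, h⟩ hy
  · rw [cubic_eq]; nlinarith

lemma sqrt_disc_lt_quad (hα : 0 ≤ α) (hα1 : α < 1) (hx₀ : x₀ ≤ 1 / 2)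
    (hroot : cubic α x₀ = 0) (hy : y ∈ Ioo 0 x₀) : √(disc α y) < quad α y := by
  have hq := quad_pos hα ⟨hy.1.le, hy.2.trans_le hx₀⟩
  have hc := cubic_pos_of_lt_root hα hx₀ hroot ⟨hy.1.le, hy.2⟩
  have := mul_pos (mul_pos (sub_pos.2 hα1) hy.1) hc
  rw [Real.sqrt_lt' hq]
  linarith [quad_sq_sub_disc (α := α) (x := y)]

lemma quad_lt_sqrt_disc (hα : 0 ≤ α) (hα1 : α < 1) (hx₀ : x₀ ∈ Icc 0 (1 / 2))
    (hroot : cubic α x₀ = 0) (hy : x₀ < y) : quad α y < √(disc α y) := by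
  rcases lt_or_ge (quad α y) 0 with hq | hq
  · exact hq.trans_le (Real.sqrt_nonneg _)
  have hc := cubic_neg_of_root_lt hα hx₀ hroot hy hq
  have := mul_neg_of_pos_of_neg (mul_pos (sub_pos.2 hα1) (hx₀.1.trans_lt hy)) hc
  rw [Real.lt_sqrt hq]
  linarith [quad_sq_sub_disc (α := α) (x := y)]

lemma sqrt_disc_eq_quad_of_root (hα : 0 ≤ α) (hx₀ : x₀ ∈ Icc 0 (1 / 2)) (hroot : cubic α x₀ = 0) :
    √(disc α x₀) = quad α x₀ := by
  have : disc α x₀ = quad α x₀ ^ 2 := by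
    linarith [quad_sq_sub_disc (α := α) (x := x₀), mul_eq_zero_of_right ((1 - α) * x₀) hroot]
  rw [this, Real.sqrt_sq (quad_nonneg hα hx₀)]

lemma sqrt_disc_eq_quad_iff (hα : 0 ≤ α) (hα1 : α < 1) (hx₀ : x₀ ∈ Ioc 0 (1 / 2))
    (hroot : cubic α x₀ = 0) (hy : 0 < y) : √(disc α y) = quad α y ↔ y = x₀ := by
  refine ⟨fun h => ?_, fun h => h ▸ sqrt_disc_eq_quad_of_root hα (Ioc_subset_Icc_self hx₀) hroot⟩
  rcases lt_trichotomy y x₀ with hlt | heq | hgt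
  · exact absurd h (sqrt_disc_lt_quad hα hα1 hx₀.2 hroot ⟨hy, hlt⟩).ne
  · exact heq
  · exact absurd h (quad_lt_sqrt_disc hα hα1 (Ioc_subset_Icc_self hx₀) hroot hgt).ne'

lemma disc_pos_of_root_lt (hα : 0 ≤ α) (hx₀ : x₀ ∈ Icc 0 (1 / 2)) (hroot : cubic α x₀ = 0)
    (hy : y ∈ Ioo x₀ 1) : 0 < disc α y := by
  refine disc_pos hα ⟨hx₀.1.trans_lt hy.1, hy.2⟩ ?_
  -- for `α = 0` the discriminant vanishes at `1/2`, but then `1/2` is the root `x₀` itself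
  by_contra! h
  obtain ⟨hα0, rfl⟩ := h
  have := cubic_neg_of_root_lt hα hx₀ hroot hy.1 (quad_half.symm ▸ hα)
  rw [cubic_half] at this
  linarith

lemma hasDerivAt_g (hα1 : α ≠ 1) (hy : y ≠ 0) (hD : 0 < disc α y) :
    HasDerivAt (g α) ((1 - √(disc α y)) ^ 2 / (4 * (1 - α) ^ 2 * y ^ 3 * √(disc α y)) *
      (quad α y - √(disc α y))) y := by
  set s := √(disc α y) with hs
  have hs0 : s ≠ 0 := (Real.sqrt_pos.2 hD).ne'
  have hs2 : s ^ 2 = disc α y := Real.sq_sqrt hD.le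
  have hdisc : HasDerivAt (disc α) (4 * (1 - α) * (2 * y - 1)) y := by
    have := (((hasDerivAt_id y).const_mul (4 * (1 - α))).mul
      ((hasDerivAt_const y (1 : ℝ)).sub (hasDerivAt_id y))).const_sub 1
    exact this.congr_deriv (by simp only [id_eq, Pi.sub_apply]; ring)
  have hnum := ((hdisc.sqrt hD.ne').const_sub 1).pow 3
  have hden := (hasDerivAt_pow 2 y).const_mul (8 * (1 - α) ^ 2)
  have hquot := hnum.div hden (by positivity)
  have heq : (fun x => (1 - √(disc α x)) ^ 3 / (8 * (1 - α) ^ 2 * x ^ 2)) =ᶠ[nhds y] g α := by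
    filter_upwards [eventually_ne_nhds hy] with x hx
    rw [g_of_ne_zero hx]
  refine (hquot.congr_of_eventuallyEq heq.symm).congr_deriv ?_
  simp only [Pi.pow_apply]
  rw [← hs]
  unfold quad
  field_simp
  norm_num
  unfold disc at hs2
  linear_combination (16 * y * (1 - s) ^ 2) * hs2

lemma exists_deriv_g_eq_mul (hα1 : α < 1) (hy : y ∈ Ioo 0 1) (hD : 0 < disc α y) :
    ∃ K > 0, deriv (g α) y = K * (quad α y - √(disc α y)) := by
  have hs0 := Real.sqrt_pos.2 hD
  have hs1 := sub_pos.2 (sqrt_disc_lt_one hα1 hy)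
  have hb := sub_pos.2 hα1
  have := hy.1
  exact ⟨_, by positivity, (hasDerivAt_g hα1.ne hy.1.ne' hD).deriv⟩

lemma continuousOn_g (hα1 : α ≠ 1) : ContinuousOn (g α) (Ioi 0) := by
  have : ContinuousOn (fun x => (1 - √(disc α x)) ^ 3 / (8 * (1 - α) ^ 2 * x ^ 2)) (Ioi 0) :=
    ContinuousOn.div (by unfold disc; fun_prop) (by fun_prop) fun x hx => by
      have : x ≠ 0 := ne_of_gt hx
      positivity
  exact this.congr fun x hx => g_of_ne_zero (ne_of_gt hx)

lemma g_pos (hα1 : α < 1) (hx : x ∈ Ioo 0 1) : 0 < g α x := by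
  rw [g_of_ne_zero hx.1.ne']
  have := sub_pos.2 (sqrt_disc_lt_one hα1 hx)
  have := sub_pos.2 hα1
  have := hx.1
  positivity

lemma g_strictMonoOn (hα : 0 ≤ α) (hα1 : α < 1) (hx₀ : x₀ ≤ 1 / 2) (hroot : cubic α x₀ = 0) :
    StrictMonoOn (g α) (Ioc 0 x₀) := by
  refine strictMonoOn_of_deriv_pos (convex_Ioc 0 x₀)
    ((continuousOn_g hα1.ne).mono fun z hz => hz.1) fun y hy => ?_
  rw [interior_Ioc] at hy
  have hy1 : y < 1 / 2 := hy.2.trans_le hx₀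
  obtain ⟨K, hK, hderiv⟩ := exists_deriv_g_eq_mul hα1 ⟨hy.1, by linarith⟩
    (disc_pos hα ⟨hy.1, by linarith⟩ (Or.inr hy1.ne))
  rw [hderiv]
  exact mul_pos hK (sub_pos.2 (sqrt_disc_lt_quad hα hα1 hx₀ hroot hy))

lemma g_strictAntiOn (hα : 0 ≤ α) (hα1 : α < 1) (hx₀ : x₀ ∈ Ioc 0 (1 / 2))
    (hroot : cubic α x₀ = 0) : StrictAntiOn (g α) (Icc x₀ 1) := by
  refine strictAntiOn_of_deriv_neg (convex_Icc x₀ 1)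
    ((continuousOn_g hα1.ne).mono fun z hz => hx₀.1.trans_le hz.1) fun y hy => ?_
  rw [interior_Icc] at hy
  obtain ⟨K, hK, hderiv⟩ := exists_deriv_g_eq_mul hα1 ⟨hx₀.1.trans hy.1, hy.2⟩
    (disc_pos_of_root_lt hα (Ioc_subset_Icc_self hx₀) hroot hy)
  rw [hderiv]
  exact mul_neg_of_pos_of_neg hK
    (sub_neg.2 (quad_lt_sqrt_disc hα hα1 (Ioc_subset_Icc_self hx₀) hroot hy.1))

lemma g_lt_g_root (hα : 0 ≤ α) (hα1 : α < 1) (hx₀ : x₀ ∈ Ioc 0 (1 / 2))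
    (hroot : cubic α x₀ = 0) (hx : x ∈ Icc 0 1) (hne : x ≠ x₀) : g α x < g α x₀ := by
  rcases hne.lt_or_gt with hlt | hgt
  · rcases hx.1.eq_or_lt with rfl | hpos
    · simpa [g] using g_pos hα1 ⟨hx₀.1, by linarith [hx₀.2]⟩
    · exact g_strictMonoOn hα hα1 hx₀.2 hroot ⟨hpos, hlt.le⟩ ⟨hx₀.1, le_rfl⟩ hlt
  · exact g_strictAntiOn hα hα1 hx₀ hroot ⟨le_rfl, by linarith [hx₀.2]⟩ ⟨hgt.le, hx.2⟩ hgt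

lemma G_eq_add_half_iff (hα1 : α ≠ 1) (hy : y ≠ 0) :
    G α y = y + 1 / 2 ↔ √(disc α y) = quad α y := by
  rw [G_of_ne_zero hy, div_eq_iff (by positivity), quad]
  constructor <;> intro h <;> linarith

lemma deriv_g_eq_zero_iff (hα1 : α < 1) (hy : y ∈ Ioo 0 1) (hD : 0 < disc α y) :
    deriv (g α) y = 0 ↔ √(disc α y) = quad α y := by
  obtain ⟨K, hK, hderiv⟩ := exists_deriv_g_eq_mul hα1 hy hD
  rw [hderiv, mul_eq_zero, or_iff_right hK.ne', sub_eq_zero, eq_comm]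

end

theorem stmt3 (α : ℝ) (hα : α ∈ Set.Ico (0 : ℝ) 1) :
    ∃ x0 ∈ Set.Ioc (0 : ℝ) (1 / 2),
      -- x0 is a global maximum of g α on [0,1]
      (∀ x ∈ Set.Icc (0 : ℝ) 1, g α x ≤ g α x0) ∧
      -- x0 is the unique global maximizer on [0,1]
      (∀ y ∈ Set.Icc (0 : ℝ) 1, (∀ x ∈ Set.Icc (0 : ℝ) 1, g α x ≤ g α y) → y = x0) ∧
      -- x0 is the unique solution in (0,1/2] of G α x = x + 1/2
      (∀ y ∈ Set.Ioc (0 : ℝ) (1 / 2), (G α y = y + 1 / 2 ↔ y = x0)) ∧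
      -- if α > 0, x0 is the only critical point of g α in (0,1)
      (0 < α → ∀ y ∈ Set.Ioo (0 : ℝ) 1, (deriv (g α) y = 0 ↔ y = x0)) := by
  obtain ⟨hα0, hα1⟩ := hα
  obtain ⟨x₀, hx₀, hroot⟩ := exists_cubic_root hα0
  have hmax : ∀ x ∈ Icc 0 1, x ≠ x₀ → g α x < g α x₀ := fun x hx =>
    g_lt_g_root hα0 hα1 hx₀ hroot hx
  refine ⟨x₀, hx₀, fun x hx => ?_, fun y hy hy_max => ?_, fun y hy => ?_, fun hα y hy => ?_⟩
  · rcases eq_or_ne x x₀ with rfl | hne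
    exacts [le_rfl, (hmax x hx hne).le]
  · by_contra hne
    exact (hmax y hy hne).not_ge (hy_max x₀ ⟨hx₀.1.le, by linarith [hx₀.2]⟩)
  · rw [G_eq_add_half_iff hα1.ne hy.1.ne']
    exact sqrt_disc_eq_quad_iff hα0 hα1 hx₀ hroot hy.1
  · rw [deriv_g_eq_zero_iff hα1 hy (disc_pos hα0 hy (Or.inl hα))]
    exact sqrt_disc_eq_quad_iff hα0 hα1 hx₀ hroot hy.1
end

section
/- Fix i \in \{1,2\} and suppose \alpha_i \in (0,1) and \varphi_i = (1-\alpha_i)\beta_i < 2\log 2, and let x_0 be the unique maximizer of g_{\alpha_i} on [0,1]. Then for every p = (p_1,p_2) \in [0,1]^2 with p_1 + p_2 \le 1 and p_i \le \bar{p}_i we have f_i(p) < x_0. In particular g_{\alpha_i}'(f_i(p)) \ge 0 for all p \in [0,\bar{p}_1] \times [0,\bar{p}_2]. -/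
/-- The growth map `f_i(p) = (1 - e^{-Σ_p}) β_i p_i / Σ_p`  (with `f_i(0,0) = 0`),
where `Σ_p = β 0 * p 0 + β 1 * p 1`.  Types are indexed by `Fin 2`. -/
noncomputable def fm (β : Fin 2 → ℝ) (i : Fin 2) (p : Fin 2 → ℝ) : ℝ :=
  if β 0 * p 0 + β 1 * p 1 = 0 then 0
  else (1 - Real.exp (-(β 0 * p 0 + β 1 * p 1))) * (β i * p i) / (β 0 * p 0 + β 1 * p 1)

/-- `pbar α = sup_{x ∈ [0,1]} g α x`, the maximal density after an epidemic stage. -/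
noncomputable def pbar (α : ℝ) : ℝ := sSup (g α '' Set.Icc 0 1)

open Real Set

theorem Real.log_one_add_le_cubic {z : ℝ} (hz0 : 0 ≤ z) (hz1 : z ≤ 1) :
    log (1 + z) ≤ z - z ^ 2 / 2 + z ^ 3 / 3 := by
  set q := z - z ^ 2 / 2 + z ^ 3 / 3 with hq
  have hq0 : 0 ≤ q := by nlinarith [sq_nonneg (z - 1 / 2)]
  have hexp : 1 + q + q ^ 2 / 2 + q ^ 3 / 6 ≤ exp q := by
    simpa [Finset.sum_range_succ, Nat.factorial] using sum_le_exp_of_nonneg hq0 4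
  have hpoly : 1 + z ≤ 1 + q + q ^ 2 / 2 + q ^ 3 / 6 := by
    have hfactor : 1 + q + q ^ 2 / 2 + q ^ 3 / 6 - (1 + z) = z ^ 4 *
        (5 / 24 + z / 8 - 19 / 144 * z ^ 2 + 7 / 72 * z ^ 3 - z ^ 4 / 36 + z ^ 5 / 162) := by
      rw [hq]; ring
    have : 0 ≤ 5 / 24 + z / 8 - 19 / 144 * z ^ 2 + 7 / 72 * z ^ 3 - z ^ 4 / 36 + z ^ 5 / 162 := by
      nlinarith [pow_le_one₀ hz0 hz1 (n := 2), pow_le_one₀ hz0 hz1 (n := 4), pow_nonneg hz0 3,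
        pow_nonneg hz0 5]
    nlinarith [pow_nonneg hz0 4]
  rw [log_le_iff_le_exp (by linarith)]
  exact hpoly.trans hexp

/- With `z = 1 - 2x` we have `log (1 - x) = log (1 + z) - log 2`, and the cubic bound on
`log (1 + z)` leaves a polynomial inequality in `z ∈ [0, 1/2]`; it is tight at `z = 0`, hence the
nine-digit bounds on `log 2`. -/
theorem Real.log_two_mul_le_neg_log_one_sub {x : ℝ} (hx1 : 1 / 4 ≤ x) (hx2 : x ≤ 1 / 2) :
    log 2 * (x * (2 * x + 1) ^ 3) / 4 ≤ -log (1 - x) := by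
  set z : ℝ := 1 - 2 * x with hz
  have hz0 : 0 ≤ z := by linarith
  have hz2 : z ≤ 1 / 2 := by linarith
  have hlog : log (1 - x) = log (1 + z) - log 2 := by
    rw [show 1 - x = (1 + z) / 2 by rw [hz]; ring, log_div (by linarith) two_ne_zero]
  have hx : x = (1 - z) / 2 := by rw [hz]; ring
  have hcubic := log_one_add_le_cubic hz0 (by linarith)
  have hL1 : (0.6931471803 : ℝ) < log 2 := log_two_gt_d9
  have hL2 : log 2 < 0.6931471808 := log_two_lt_d9
  rw [hlog, hx]
  have hpoly : 0 ≤ 10 * log 2 - 4 + (2 - 9 * log 2) * z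
      + (7 / 2 * log 2 - 4 / 3) * z ^ 2 - log 2 / 2 * z ^ 3 := by
    nlinarith [mul_nonneg (mul_nonneg hz0 hz0) (sub_nonneg.2 hz2),
      mul_nonneg hz0 (sub_nonneg.2 hz2), sq_nonneg z]
  nlinarith [mul_nonneg hz0 hpoly]

theorem Real.mul_one_sub_exp_neg_le {t : ℝ} (ht0 : 0 ≤ t) (ht1 : t ≤ 1) (s : ℝ) :
    t * (1 - exp (-s)) ≤ 1 - exp (-(t * s)) := by
  have h := convexOn_exp.2 (mem_univ (-s)) (mem_univ 0) ht0 (sub_nonneg.2 ht1) (by ring)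
  simp only [smul_eq_mul, mul_zero, add_zero, exp_zero, mul_one, mul_neg] at h
  linarith

theorem Real.one_sub_exp_neg_lt {x y : ℝ} (hx : x < 1) (h : y < -log (1 - x)) :
    1 - exp (-y) < x := by
  have : 1 - x < exp (-y) := (log_lt_iff_lt_exp (by linarith)).1 (by linarith)
  linarith

section GrowthMap

variable {β p : Fin 2 → ℝ}

theorem mul_le_add_mul_fin_two (hβ : ∀ j, 0 ≤ β j) (hp : ∀ j, 0 ≤ p j) (i : Fin 2) :
    β i * p i ≤ β 0 * p 0 + β 1 * p 1 := by
  fin_cases i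
  · exact le_add_of_nonneg_right (mul_nonneg (hβ 1) (hp 1))
  · exact le_add_of_nonneg_left (mul_nonneg (hβ 0) (hp 0))

theorem fm_nonneg (hβ : ∀ j, 0 ≤ β j) (hp : ∀ j, 0 ≤ p j) (i : Fin 2) : 0 ≤ fm β i p := by
  have hi := mul_nonneg (hβ i) (hp i)
  have hS := hi.trans (mul_le_add_mul_fin_two hβ hp i)
  unfold fm
  split_ifs
  · rfl
  · have : 0 ≤ 1 - exp (-(β 0 * p 0 + β 1 * p 1)) := by
      rw [sub_nonneg, exp_le_one_iff]; linarith
    exact div_nonneg (mul_nonneg this hi) hS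

/- `f_i(p) = t (1 - e^{-Σ_p})` with `t = β_i p_i / Σ_p ∈ [0, 1]`, and `t Σ_p = β_i p_i`. -/
theorem fm_le_one_sub_exp (hβ : ∀ j, 0 ≤ β j) (hp : ∀ j, 0 ≤ p j) (i : Fin 2) :
    fm β i p ≤ 1 - exp (-(β i * p i)) := by
  have hi := mul_nonneg (hβ i) (hp i)
  have hle := mul_le_add_mul_fin_two hβ hp i
  unfold fm
  split_ifs with hS
  · rw [sub_nonneg, exp_le_one_iff]; linarith
  · have hSpos : 0 < β 0 * p 0 + β 1 * p 1 := lt_of_le_of_ne (hi.trans hle) (Ne.symm hS)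
    have h := mul_one_sub_exp_neg_le (div_nonneg hi hSpos.le) ((div_le_one hSpos).2 hle)
      (β 0 * p 0 + β 1 * p 1)
    rwa [div_mul_cancel₀ _ hS, div_mul_eq_mul_div, mul_comm] at h

end GrowthMap

section EpidemicDensity

variable {a x : ℝ}

noncomputable def gSqrt (a x : ℝ) : ℝ := √(1 - 4 * (1 - a) * x * (1 - x))

theorem gRadicand_pos (ha0 : 0 < a) (ha1 : a < 1) (x : ℝ) :
    0 < 1 - 4 * (1 - a) * x * (1 - x) := by
  nlinarith [sq_nonneg (1 - 2 * x)]

theorem gSqrt_pos (ha0 : 0 < a) (ha1 : a < 1) (x : ℝ) : 0 < gSqrt a x :=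
  sqrt_pos.2 (gRadicand_pos ha0 ha1 x)

theorem sq_gSqrt (ha0 : 0 < a) (ha1 : a < 1) (x : ℝ) :
    gSqrt a x ^ 2 = 1 - 4 * (1 - a) * x * (1 - x) :=
  sq_sqrt (gRadicand_pos ha0 ha1 x).le

theorem gSqrt_one_sub (a x : ℝ) : gSqrt a (1 - x) = gSqrt a x := by
  unfold gSqrt; ring_nf

theorem g_eq_div (ha0 : 0 < a) (ha1 : a < 1) (x : ℝ) :
    g a x = 8 * (1 - a) * x * (1 - x) ^ 3 / (1 + gSqrt a x) ^ 3 := by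
  have hS2 := sq_gSqrt ha0 ha1 x
  have hS := gSqrt_pos ha0 ha1 x
  rcases eq_or_ne x 0 with rfl | hx
  · simp [g]
  · have : 1 - a ≠ 0 := by linarith
    rw [g, if_neg hx, ← gSqrt, div_eq_div_iff (by positivity) (by positivity)]
    linear_combination (-((1 - gSqrt a x ^ 2) ^ 2 + (1 - gSqrt a x ^ 2) * (4 * (1 - a) * x * (1 - x))
      + (4 * (1 - a) * x * (1 - x)) ^ 2)) * hS2

theorem g_pos_s4 (ha0 : 0 < a) (ha1 : a < 1) (hx0 : 0 < x) (hx1 : x < 1) : 0 < g a x := by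
  have := gSqrt_pos ha0 ha1 x
  have : 0 < 1 - a := by linarith
  have : 0 < 1 - x := by linarith
  rw [g_eq_div ha0 ha1]
  positivity

theorem g_one (a : ℝ) : g a 1 = 0 := by simp [g]

theorem g_lt_g_one_sub (ha0 : 0 < a) (ha1 : a < 1) (hx0 : 1 / 2 < x) (hx1 : x < 1) :
    g a x < g a (1 - x) := by
  have := gSqrt_pos ha0 ha1 x
  have : 0 < 1 - a := by linarith
  have : 0 < 1 - x := by linarith
  have : 0 < 2 * x - 1 := by linarith
  rw [g_eq_div ha0 ha1, g_eq_div ha0 ha1, gSqrt_one_sub, div_lt_div_iff_of_pos_right (by positivity),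
    ← sub_pos]
  have : 8 * (1 - a) * (1 - x) * (1 - (1 - x)) ^ 3 - 8 * (1 - a) * x * (1 - x) ^ 3
      = 8 * (1 - a) * x * (1 - x) * (2 * x - 1) := by ring
  rw [this]
  positivity

noncomputable def gDeriv (a x : ℝ) : ℝ :=
  4 * (1 - a) * (1 - x) ^ 2 * (3 - 6 * x - (1 + 2 * x) * gSqrt a x) /
    ((1 + gSqrt a x) ^ 3 * gSqrt a x)

theorem hasDerivAt_g_s4 (ha0 : 0 < a) (ha1 : a < 1) (x : ℝ) : HasDerivAt (g a) (gDeriv a x) x := by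
  have hS := gSqrt_pos ha0 ha1 x
  have hS2 := sq_gSqrt ha0 ha1 x
  have hrad : HasDerivAt (fun y => 1 - 4 * (1 - a) * y * (1 - y)) (-4 * (1 - a) * (1 - 2 * x)) x := by
    refine ((((hasDerivAt_id' x).const_mul (4 * (1 - a))).fun_mul
      ((hasDerivAt_id' x).const_sub 1)).const_sub 1).congr_deriv ?_
    ring
  have hsqrt : HasDerivAt (gSqrt a) (-4 * (1 - a) * (1 - 2 * x) / (2 * gSqrt a x)) x :=
    hrad.sqrt (gRadicand_pos ha0 ha1 x).ne'
  have hnum : HasDerivAt (fun y => 8 * (1 - a) * y * (1 - y) ^ 3)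
      (8 * (1 - a) * (1 - x) ^ 3 - 24 * (1 - a) * x * (1 - x) ^ 2) x := by
    refine (((hasDerivAt_id' x).const_mul (8 * (1 - a))).fun_mul
      (((hasDerivAt_id' x).const_sub 1).fun_pow 3)).congr_deriv ?_
    ring
  have hden := (hsqrt.const_add 1).fun_pow 3
  rw [show g a = fun y => 8 * (1 - a) * y * (1 - y) ^ 3 / (1 + gSqrt a y) ^ 3 from
    funext (g_eq_div ha0 ha1)]
  refine (hnum.fun_div hden (by positivity)).congr_deriv ?_
  unfold gDeriv
  field_simp
  norm_num
  linear_combination 24 * (1 - a) * (1 - x) ^ 2 * (1 + gSqrt a x) ^ 2 * (1 - 2 * x) * hS2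

noncomputable def gCritCubic (a x : ℝ) : ℝ := (1 - a) * x * (2 * x + 1) ^ 2 - 2 * (4 * x - 1)

theorem gCritCubic_strictAntiOn (ha : 0 ≤ a) : StrictAntiOn (gCritCubic a) (Icc 0 (1 / 2)) := by
  intro s ⟨hs0, hs1⟩ t ⟨ht0, ht1⟩ hst
  set W := 4 * (s ^ 2 + s * t + t ^ 2) + 4 * (s + t) + 1 with hW
  have hW0 : 0 ≤ W := by positivity
  have hW8 : W < 8 := by nlinarith
  have hdiff : gCritCubic a s - gCritCubic a t = (t - s) * (8 - (1 - a) * W) := by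
    rw [hW]; unfold gCritCubic; ring
  have : 0 < 8 - (1 - a) * W := by nlinarith [mul_nonneg ha hW0]
  nlinarith [mul_pos (sub_pos.2 hst) this]

/- The sign of `gDeriv a x` is that of `3 - 6x - (1 + 2x) √D`; for `x ≤ 1/2` both terms are
nonnegative, so it is also the sign of this difference of squares. -/
theorem sq_sub_sq_eq_gCritCubic (ha0 : 0 < a) (ha1 : a < 1) (x : ℝ) :
    (3 - 6 * x) ^ 2 - ((1 + 2 * x) * gSqrt a x) ^ 2 = 4 * (1 - x) * gCritCubic a x := by
  unfold gCritCubic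
  linear_combination (-(1 + 2 * x) ^ 2) * sq_gSqrt ha0 ha1 x

theorem gDeriv_nonneg (ha0 : 0 < a) (ha1 : a < 1) (hx0 : 0 ≤ x) (hx1 : x ≤ 1 / 2)
    (h : 0 ≤ gCritCubic a x) : 0 ≤ gDeriv a x := by
  have hS := gSqrt_pos ha0 ha1 x
  have hsq := sq_sub_sq_eq_gCritCubic ha0 ha1 x
  have hle : (1 + 2 * x) * gSqrt a x ≤ 3 - 6 * x :=
    (sq_le_sq₀ (by positivity) (by linarith)).1 (by nlinarith)
  have : 0 ≤ 1 - a := by linarith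
  exact div_nonneg (mul_nonneg (by positivity) (by linarith)) (by positivity)

theorem critical_eq_of_gDeriv_eq_zero (ha0 : 0 < a) (ha1 : a < 1) (hx : x < 1)
    (h : gDeriv a x = 0) : (1 + 2 * x) * gSqrt a x = 3 - 6 * x := by
  have hS := gSqrt_pos ha0 ha1 x
  have : 0 < 1 - a := by linarith
  have : 0 < 1 - x := by linarith
  obtain h | h := div_eq_zero_iff.1 h
  · obtain h | h := mul_eq_zero.1 h
    · exact absurd h (by positivity)
    · linarith
  · exact absurd h (by positivity)

theorem gCritCubic_eq_zero_of_critical_eq (ha0 : 0 < a) (ha1 : a < 1) (hx : x < 1)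
    (h : (1 + 2 * x) * gSqrt a x = 3 - 6 * x) : gCritCubic a x = 0 := by
  have hsq := sq_sub_sq_eq_gCritCubic ha0 ha1 x
  rw [h, sub_self, eq_comm] at hsq
  have : 4 * (1 - x) ≠ 0 := by linarith
  exact (mul_eq_zero.1 hsq).resolve_left this

theorem g_eq_of_critical_eq (ha0 : 0 < a) (ha1 : a < 1) (hx0 : 0 ≤ x) (hx1 : x < 1)
    (h : (1 + 2 * x) * gSqrt a x = 3 - 6 * x) : g a x = (1 - a) * x * (2 * x + 1) ^ 3 / 8 := by
  have h1S : 1 + gSqrt a x = 4 * (1 - x) / (2 * x + 1) := by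
    rw [eq_div_iff (by linarith)]; linear_combination h
  have : 1 - x ≠ 0 := by linarith
  rw [g_eq_div ha0 ha1, h1S]
  field_simp
  ring

theorem g_maximizer_mem_Ioc (ha0 : 0 < a) (ha1 : a < 1) {x0 : ℝ}
    (hmax : IsMaxOn (g a) (Icc 0 1) x0) (hx0 : x0 ∈ Icc 0 1) : x0 ∈ Ioc 0 (1 / 2) := by
  have hpos : 0 < g a x0 :=
    (g_pos_s4 ha0 ha1 (by norm_num) (by norm_num)).trans_le (hmax (by norm_num : (1 / 2 : ℝ) ∈ Icc 0 1))
  have hne0 : x0 ≠ 0 := by rintro rfl; simp [g] at hpos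
  have hne1 : x0 ≠ 1 := by rintro rfl; simp [g_one] at hpos
  refine ⟨lt_of_le_of_ne hx0.1 (Ne.symm hne0), not_lt.1 fun hlt => ?_⟩
  have := g_lt_g_one_sub ha0 ha1 hlt (lt_of_le_of_ne hx0.2 hne1)
  exact not_lt.2 (hmax (by constructor <;> linarith [hx0.2] : 1 - x0 ∈ Icc (0 : ℝ) 1)) this

theorem g_maximizer_spec (ha0 : 0 < a) (ha1 : a < 1) {x0 : ℝ}
    (hmax : IsMaxOn (g a) (Icc 0 1) x0) (hx0 : x0 ∈ Icc 0 1) :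
    x0 ∈ Ioo (1 / 4) (1 / 2) ∧ gCritCubic a x0 = 0 ∧
      g a x0 = (1 - a) * x0 * (2 * x0 + 1) ^ 3 / 8 := by
  obtain ⟨hpos, hhalf⟩ := g_maximizer_mem_Ioc ha0 ha1 hmax hx0
  have hlt1 : x0 < 1 := by linarith
  have hderiv : gDeriv a x0 = 0 :=
    (hmax.isLocalMax (Icc_mem_nhds hpos hlt1)).hasDerivAt_eq_zero (hasDerivAt_g_s4 ha0 ha1 x0)
  have hcrit := critical_eq_of_gDeriv_eq_zero ha0 ha1 hlt1 hderiv
  have hcubic := gCritCubic_eq_zero_of_critical_eq ha0 ha1 hlt1 hcrit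
  refine ⟨⟨?_, lt_of_le_of_ne hhalf ?_⟩, hcubic, g_eq_of_critical_eq ha0 ha1 hpos.le hlt1 hcrit⟩
  · unfold gCritCubic at hcubic
    nlinarith [mul_pos (mul_pos (sub_pos.2 ha1) hpos) (by positivity : (0 : ℝ) < (2 * x0 + 1) ^ 2)]
  · rintro rfl
    unfold gCritCubic at hcubic
    linarith

theorem gDeriv_nonneg_of_lt (ha0 : 0 < a) (ha1 : a < 1) {x0 t : ℝ} (hcubic : gCritCubic a x0 = 0)
    (hx0 : x0 ≤ 1 / 2) (ht0 : 0 ≤ t) (ht : t < x0) : 0 ≤ gDeriv a t := by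
  have := gCritCubic_strictAntiOn ha0.le ⟨ht0, by linarith⟩ ⟨by linarith, hx0⟩ ht
  exact gDeriv_nonneg ha0 ha1 ht0 (by linarith) (by linarith)

theorem pbar_eq_of_isMaxOn {x0 : ℝ} (hmax : IsMaxOn (g a) (Icc 0 1) x0) (hx0 : x0 ∈ Icc 0 1) :
    pbar a = g a x0 :=
  IsGreatest.csSup_eq ⟨mem_image_of_mem _ hx0, by rintro _ ⟨x, hx, rfl⟩; exact hmax hx⟩

end EpidemicDensity

theorem stmt4_general (α β : Fin 2 → ℝ) (hβ : ∀ j, 0 < β j) (hα : ∀ j, α j ∈ Set.Ico (0 : ℝ) 1)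
    (i : Fin 2) (hαi : 0 < α i) (hφi : (1 - α i) * β i < 2 * Real.log 2)
    (x0 : ℝ) (hx0mem : x0 ∈ Set.Icc (0 : ℝ) 1)
    (hx0max : ∀ x ∈ Set.Icc (0 : ℝ) 1, g (α i) x ≤ g (α i) x0) :
    (∀ p : Fin 2 → ℝ, (∀ j, p j ∈ Set.Icc (0 : ℝ) 1) → p 0 + p 1 ≤ 1 →
      p i ≤ pbar (α i) → fm β i p < x0) ∧
    (∀ p : Fin 2 → ℝ, (∀ j, p j ∈ Set.Icc (0 : ℝ) (pbar (α j))) →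
      0 ≤ deriv (g (α i)) (fm β i p)) := by
  have ha1 := (hα i).2
  have hmax : IsMaxOn (g (α i)) (Icc 0 1) x0 := isMaxOn_iff.2 hx0max
  obtain ⟨⟨hx0q, hx0h⟩, hcubic, hgx0⟩ := g_maximizer_spec hαi ha1 hmax hx0mem
  have hpbar := pbar_eq_of_isMaxOn hmax hx0mem
  have hpbar_pos : 0 < pbar (α i) := hpbar ▸ g_pos_s4 hαi ha1 (by linarith) (by linarith)
  have hβ0 : ∀ j, 0 ≤ β j := fun j => (hβ j).le
  have hfm_lt : ∀ p : Fin 2 → ℝ, (∀ j, 0 ≤ p j) → p i ≤ pbar (α i) → fm β i p < x0 := by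
    intro p hp hpi
    refine (fm_le_one_sub_exp hβ0 hp i).trans_lt (one_sub_exp_neg_lt (by linarith) ?_)
    calc β i * p i ≤ β i * pbar (α i) := mul_le_mul_of_nonneg_left hpi (hβ0 i)
      _ < 2 * log 2 / (1 - α i) * pbar (α i) :=
        mul_lt_mul_of_pos_right ((lt_div_iff₀ (by linarith)).2 (by linarith)) hpbar_pos
      _ = log 2 * (x0 * (2 * x0 + 1) ^ 3) / 4 := by
        rw [hpbar, hgx0]; field_simp [(by linarith : 1 - α i ≠ 0)]; ring
      _ ≤ -log (1 - x0) := log_two_mul_le_neg_log_one_sub hx0q.le hx0h.le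
  refine ⟨fun p hp _ hpi => hfm_lt p (fun j => (hp j).1) hpi, fun p hp => ?_⟩
  have hp0 : ∀ j, 0 ≤ p j := fun j => (hp j).1
  rw [(hasDerivAt_g_s4 hαi ha1 _).deriv]
  exact gDeriv_nonneg_of_lt hαi ha1 hcubic hx0h.le (fm_nonneg hβ0 hp0 i) (hfm_lt p hp0 (hp i).2)

theorem stmt4 (α β : Fin 2 → ℝ) (hβ : ∀ j, 0 < β j) (hα : ∀ j, α j ∈ Set.Ico (0 : ℝ) 1)
    (i : Fin 2) (hαi : 0 < α i) (hφi : (1 - α i) * β i < 2 * Real.log 2)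
    (x0 : ℝ) (hx0mem : x0 ∈ Set.Icc (0 : ℝ) 1)
    (hx0max : ∀ x ∈ Set.Icc (0 : ℝ) 1, g (α i) x ≤ g (α i) x0)
    (hx0uniq : ∀ y ∈ Set.Icc (0 : ℝ) 1, (∀ x ∈ Set.Icc (0 : ℝ) 1, g (α i) x ≤ g (α i) y) → y = x0) :
    (∀ p : Fin 2 → ℝ, (∀ j, p j ∈ Set.Icc (0 : ℝ) 1) → p 0 + p 1 ≤ 1 →
      p i ≤ pbar (α i) → fm β i p < x0) ∧
    (∀ p : Fin 2 → ℝ, (∀ j, p j ∈ Set.Icc (0 : ℝ) (pbar (α j))) →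
      0 ≤ deriv (g (α i)) (fm β i p)) :=
  stmt4_general α β hβ hα i hαi hφi x0 hx0mem hx0max
end

section
/- If 0 < \varphi < 2\log 2, then for every x \in [0,1/2] one has \varphi\, x\,(1/2 + x)^3 + \log(1-x) \le 0. -/
set_option maxHeartbeats 1000000 in
theorem stmt5 (φ : ℝ) (hφ0 : 0 < φ) (hφ : φ < 2 * Real.log 2) :
    ∀ x ∈ Set.Icc (0 : ℝ) (1 / 2), φ * x * (1 / 2 + x) ^ 3 + Real.log (1 - x) ≤ 0 := by
  intro x hx
  obtain ⟨hx0, hx1⟩ := hx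
  have hL2lt : Real.log 2 < 0.6931471808 := Real.log_two_lt_d9
  have hL2gt : (0.6931471803 : ℝ) < Real.log 2 := Real.log_two_gt_d9
  have hpos : (0:ℝ) < 1 - x := by linarith
  have hφle : φ ≤ 2 * Real.log 2 := le_of_lt hφ
  have hcube : (0:ℝ) ≤ x * (1/2 + x)^3 := by positivity
  have hstep : φ * x * (1/2 + x)^3 ≤ 2 * Real.log 2 * (x * (1/2 + x)^3) := by
    have := mul_le_mul_of_nonneg_right hφle hcube
    nlinarith [this]
  rcases le_or_gt x (1/4) with hc | hc
  · -- small x: log(1-x) ≤ -x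
    have hlog : Real.log (1 - x) ≤ -x := by
      have := Real.log_le_sub_one_of_pos hpos
      linarith
    have hB : x * (1/2 + x)^3 ≤ (27/64) * x := by
      nlinarith [sq_nonneg x, mul_nonneg hx0 hx0, mul_nonneg (mul_nonneg hx0 hx0) hx0,
        mul_nonneg hx0 (sub_nonneg.2 hc)]
    have h2 : 2 * Real.log 2 * (x * (1/2 + x)^3) ≤ 2 * Real.log 2 * ((27/64) * x) :=
      mul_le_mul_of_nonneg_left hB (by positivity)
    have h3 : 2 * Real.log 2 * ((27/64) * x) ≤ x := by
      nlinarith [mul_nonneg hx0 (sub_nonneg.2 hL2lt.le)]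
    linarith
  · -- large x: t = 1/2 - x
    obtain ⟨t, ht⟩ : ∃ t, x = 1/2 - t := ⟨1/2 - x, by ring⟩
    subst ht
    have ht0 : 0 ≤ t := by linarith
    have ht1 : t < 1/4 := by linarith
    have h1x : 1 - (1/2 - t) = 2⁻¹ * (1 + 2*t) := by ring
    have hlog : Real.log (1 - (1/2 - t)) ≤ -Real.log 2 + 2*t := by
      rw [h1x, Real.log_mul (by norm_num) (by nlinarith), Real.log_inv]
      have : Real.log (1 + 2*t) ≤ 2*t := by
        have := Real.log_le_sub_one_of_pos (show (0:ℝ) < 1 + 2*t by linarith)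
        linarith
      linarith
    -- polynomial part: 2L * (1/2 - t)(1 - t)^3 ≤ L - 2t
    have hP : (5*t - 9*t^2 + 7*t^3 - 2*t^4) ≥ 3*t := by
      nlinarith [mul_nonneg ht0 ht0, mul_nonneg (mul_nonneg ht0 ht0) ht0,
        mul_nonneg (mul_nonneg (mul_nonneg ht0 ht0) ht0) ht0,
        mul_nonneg ht0 (sub_nonneg.2 ht1.le),
        mul_nonneg (mul_nonneg ht0 ht0) (sub_nonneg.2 ht1.le),
        sq_nonneg (1/4 - t)]
    have hPnn : (0:ℝ) ≤ 5*t - 9*t^2 + 7*t^3 - 2*t^4 := by linarith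
    have hLP : Real.log 2 * (5*t - 9*t^2 + 7*t^3 - 2*t^4) ≥ 2*t := by
      have h1 : 0 ≤ (Real.log 2 - 0.6931471803) * (5*t - 9*t^2 + 7*t^3 - 2*t^4) :=
        mul_nonneg (by linarith) hPnn
      linarith
    have hpoly : 2 * Real.log 2 * ((1/2 - t) * (1/2 + (1/2 - t))^3) ≤ Real.log 2 - 2*t := by
      linarith [hLP]
    linarith
end

section
/- Let \alpha \in [0,1), \beta > 0, and consider the one-type map h(p) = g_\alpha(1 - e^{-\beta p}) on [0,1]. (i) If (1-\alpha)\beta \le 1 then \lim_{k\to\infty} h^k(p) = 0 for every p \in [0,1]. (ii) If (1-\alpha)\beta > 1 then \liminf_{k\to\infty} h^k(p) > 0 for every p \in (0,1). -/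
/-- The one-type limiting map `h(p) = g_α(1 - e^{-β p})`. -/
noncomputable def oneTypeMap (α β : ℝ) (p : ℝ) : ℝ := g α (1 - Real.exp (-(β * p)))

/-!
With `a = 1 - α`, the elementary bounds `2ax(1-x) ≤ 1 - √(1 - 4ax(1-x)) ≤ 2ax` give
`a x (1-x)³ ≤ g_α(x) ≤ a x`, hence `a β p e^{-4βp} ≤ h(p) ≤ a (1 - e^{-βp})`.
If `aβ ≤ 1` the upper bound lies strictly below the diagonal on `(0, ∞)`, so the iterates decrease
to a point `L` with `L ≤ a (1 - e^{-βL})`, which forces `L = 0`. If `aβ > 1` the lower bound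
exceeds the diagonal on `(0, log(aβ)/(4β)]` and is bounded away from `0` on the rest of `(0, 1]`,
so the iterates never drop below a fixed positive level.
-/

open Real Filter Set Topology

section SqrtBounds

variable {a x : ℝ}

lemma one_sub_sqrt_le (ha0 : 0 ≤ a) (ha1 : a ≤ 1) :
    1 - √(1 - 4 * a * x * (1 - x)) ≤ 2 * a * x := by
  have hsq : (1 - 2 * a * x) ^ 2 ≤ 1 - 4 * a * x * (1 - x) := by
    nlinarith [mul_nonneg (sub_nonneg.2 ha1) (mul_nonneg ha0 (sq_nonneg x))]
  linarith [(le_abs_self _).trans (abs_le_sqrt hsq)]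

lemma le_one_sub_sqrt (ha1 : a ≤ 1) (hx0 : 0 ≤ x) (hx1 : x ≤ 1) :
    2 * a * x * (1 - x) ≤ 1 - √(1 - 4 * a * x * (1 - x)) := by
  have hu : a * (x * (1 - x)) ≤ x * (1 - x) :=
    mul_le_of_le_one_left (mul_nonneg hx0 (sub_nonneg.2 hx1)) ha1
  have hsqrt : √(1 - 4 * a * x * (1 - x)) ≤ 1 - 2 * a * x * (1 - x) :=
    sqrt_le_iff.2 ⟨by nlinarith [sq_nonneg (2 * x - 1)], by nlinarith [sq_nonneg (a * x * (1 - x))]⟩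
  linarith

end SqrtBounds

section BoundsOnG

variable {α x : ℝ}

lemma g_le (hα0 : 0 ≤ α) (hα1 : α < 1) (hx0 : 0 ≤ x) (hx1 : x ≤ 1) :
    g α x ≤ (1 - α) * x := by
  rcases hx0.eq_or_lt with rfl | hx
  · simp [g]
  have hsqrt := one_sub_sqrt_le (x := x) (sub_nonneg.2 hα1.le) (by linarith : 1 - α ≤ 1)
  have hnum : (1 - √(1 - 4 * (1 - α) * x * (1 - x))) ^ 3 ≤ (2 * (1 - α) * x) ^ 3 := by
    refine pow_le_pow_left₀ ?_ hsqrt 3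
    have := mul_nonneg (mul_nonneg (sub_nonneg.2 hα1.le) hx0) (sub_nonneg.2 hx1)
    linarith [le_one_sub_sqrt (by linarith : 1 - α ≤ 1) hx0 hx1]
  rw [g, if_neg hx.ne', div_le_iff₀ (by have := sub_pos.2 hα1; positivity)]
  linarith [show (2 * (1 - α) * x) ^ 3 = (1 - α) * x * (8 * (1 - α) ^ 2 * x ^ 2) by ring]

lemma le_g (hα0 : 0 ≤ α) (hα1 : α < 1) (hx0 : 0 ≤ x) (hx1 : x ≤ 1) :
    (1 - α) * x * (1 - x) ^ 3 ≤ g α x := by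
  rcases hx0.eq_or_lt with rfl | hx
  · simp [g]
  have hnum : (2 * (1 - α) * x * (1 - x)) ^ 3 ≤ (1 - √(1 - 4 * (1 - α) * x * (1 - x))) ^ 3 :=
    pow_le_pow_left₀ (by have := sub_pos.2 hα1; have := sub_nonneg.2 hx1; positivity)
      (le_one_sub_sqrt (by linarith) hx0 hx1) 3
  rw [g, if_neg hx.ne', le_div_iff₀ (by have := sub_pos.2 hα1; positivity)]
  linarith [show (2 * (1 - α) * x * (1 - x)) ^ 3
    = (1 - α) * x * (1 - x) ^ 3 * (8 * (1 - α) ^ 2 * x ^ 2) by ring]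

end BoundsOnG

lemma mul_exp_neg_le_one_sub_exp_neg (t : ℝ) : t * exp (-t) ≤ 1 - exp (-t) := by
  have h := mul_le_mul_of_nonneg_right (add_one_le_exp t) (exp_pos (-t)).le
  rw [← exp_add, add_neg_cancel, exp_zero] at h
  linarith

section BoundsOnOneTypeMap

variable {α β q : ℝ}

lemma oneTypeMap_le (hα : α ∈ Ico 0 1) (hβ : 0 ≤ β) (hq : 0 ≤ q) :
    oneTypeMap α β q ≤ (1 - α) * (1 - exp (-(β * q))) :=
  g_le hα.1 hα.2 (sub_nonneg.2 (exp_le_one_iff.2 (by nlinarith)))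
    (sub_le_self _ (exp_pos _).le)

lemma mul_exp_le_oneTypeMap (hα : α ∈ Ico 0 1) (hβ : 0 ≤ β) (hq : 0 ≤ q) :
    (1 - α) * β * q * exp (-(4 * β * q)) ≤ oneTypeMap α β q := by
  have hlow := le_g hα.1 hα.2 (sub_nonneg.2 (exp_le_one_iff.2 (by nlinarith : -(β * q) ≤ 0)))
    (sub_le_self _ (exp_pos _).le)
  rw [sub_sub_cancel] at hlow
  have hsplit : exp (-(4 * β * q)) = exp (-(β * q)) * exp (-(β * q)) ^ 3 := by
    rw [← exp_nat_mul, ← exp_add]; push_cast; ring_nf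
  calc (1 - α) * β * q * exp (-(4 * β * q))
      = (1 - α) * (β * q * exp (-(β * q))) * exp (-(β * q)) ^ 3 := by rw [hsplit]; ring
    _ ≤ (1 - α) * (1 - exp (-(β * q))) * exp (-(β * q)) ^ 3 := by
        gcongr
        · exact sub_nonneg.2 hα.2.le
        · exact mul_exp_neg_le_one_sub_exp_neg _
    _ ≤ oneTypeMap α β q := hlow

lemma oneTypeMap_nonneg (hα : α ∈ Ico 0 1) (hβ : 0 ≤ β) (hq : 0 ≤ q) :
    0 ≤ oneTypeMap α β q := by
  refine le_trans ?_ (mul_exp_le_oneTypeMap hα hβ hq)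
  have := sub_pos.2 hα.2
  positivity

lemma oneTypeMap_le_one (hα : α ∈ Ico 0 1) (hβ : 0 ≤ β) (hq : 0 ≤ q) :
    oneTypeMap α β q ≤ 1 :=
  (oneTypeMap_le hα hβ hq).trans <| mul_le_one₀ (by linarith [hα.1])
    (sub_nonneg.2 (exp_le_one_iff.2 (by nlinarith))) (sub_le_self _ (exp_pos _).le)

end BoundsOnOneTypeMap

lemma mul_one_sub_exp_neg_lt {a β q : ℝ} (ha : 0 < a) (haβ : a * β ≤ 1) (hq : 0 < q) :
    a * (1 - exp (-(β * q))) < q := by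
  rcases eq_or_ne (β * q) 0 with hβq | hβq
  · simpa [hβq] using hq
  have hlt : 1 - exp (-(β * q)) < β * q := by
    linarith [add_one_lt_exp (neg_ne_zero.2 hβq)]
  nlinarith

lemma tendsto_zero_of_le_comp {u : ℕ → ℝ} {f : ℝ → ℝ} (hf : Continuous f) (hf0 : f 0 = 0)
    (hf_lt : ∀ q, 0 < q → f q < q) (hu0 : ∀ k, 0 ≤ u k) (hu : ∀ k, u (k + 1) ≤ f (u k)) :
    Tendsto u atTop (𝓝 0) := by
  have hanti : Antitone u := by
    refine antitone_nat_of_succ_le fun k => (hu k).trans ?_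
    rcases (hu0 k).eq_or_lt with h | h
    · rw [← h, hf0]
    · exact (hf_lt _ h).le
  have hlim := tendsto_atTop_ciInf hanti ⟨0, forall_mem_range.2 hu0⟩
  have hL0 : 0 ≤ ⨅ k, u k := le_ciInf hu0
  have hLf : ⨅ k, u k ≤ f (⨅ k, u k) :=
    le_of_tendsto_of_tendsto' (hlim.comp (tendsto_add_atTop_nat 1)) ((hf.tendsto _).comp hlim) hu
  rcases hL0.eq_or_lt with h | h
  · rwa [← h] at hlim
  · exact absurd hLf (hf_lt _ h).not_ge

lemma exists_min_le_mul_exp {K r : ℝ} (hK : 1 < K) (hr : 0 < r) :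
    ∃ c > 0, ∀ q ∈ Ioc (0 : ℝ) 1, min q c ≤ K * q * exp (-(r * q)) := by
  -- below `δ` the curve lies above the diagonal, since `K e^{-rδ} = 1`
  set δ := log K / r
  have hδ : 0 < δ := div_pos (log_pos hK) hr
  have hKδ : K * exp (-(r * δ)) = 1 := by
    rw [mul_div_cancel₀ _ hr.ne', exp_neg, exp_log (by linarith)]
    exact mul_inv_cancel₀ (by linarith)
  refine ⟨min δ (K * δ * exp (-r)), lt_min hδ (by positivity), fun q ⟨hq0, hq1⟩ => ?_⟩
  rcases le_total q δ with hqδ | hδq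
  · calc min q (min δ (K * δ * exp (-r))) ≤ q := min_le_left _ _
      _ = K * q * exp (-(r * δ)) := by rw [mul_right_comm, hKδ, one_mul]
      _ ≤ K * q * exp (-(r * q)) := by gcongr
  · calc min q (min δ (K * δ * exp (-r))) ≤ K * δ * exp (-r) :=
          (min_le_right _ _).trans (min_le_right _ _)
      _ ≤ K * q * exp (-(r * q)) := by gcongr; nlinarith

lemma liminf_iterate_pos {h : ℝ → ℝ} {c p : ℝ} (hc : 0 < c)
    (hh : ∀ q ∈ Ioc (0 : ℝ) 1, min q c ≤ h q ∧ h q ≤ 1) (hp : p ∈ Ioc (0 : ℝ) 1) :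
    0 < liminf (fun k : ℕ => h^[k] p) atTop := by
  have hbound : ∀ k, min p c ≤ h^[k] p ∧ h^[k] p ≤ 1 := by
    intro k
    induction k with
    | zero => exact ⟨min_le_left _ _, hp.2⟩
    | succ k ih =>
      rw [Function.iterate_succ_apply']
      have hmem : h^[k] p ∈ Ioc (0 : ℝ) 1 := ⟨(lt_min hp.1 hc).trans_le ih.1, ih.2⟩
      exact ⟨le_trans (le_min ih.1 (min_le_right _ _)) (hh _ hmem).1, (hh _ hmem).2⟩
  exact (lt_min hp.1 hc).trans_le <| le_liminf_of_le
    (isCoboundedUnder_ge_of_le atTop fun k => (hbound k).2) (.of_forall fun k => (hbound k).1)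

theorem stmt6 (α β : ℝ) (hα : α ∈ Set.Ico (0 : ℝ) 1) (hβ : 0 < β) :
    -- (i) extinction
    ((1 - α) * β ≤ 1 → ∀ p ∈ Set.Icc (0 : ℝ) 1,
      Filter.Tendsto (fun k : ℕ => (oneTypeMap α β)^[k] p) Filter.atTop (nhds 0)) ∧
    -- (ii) survival
    (1 < (1 - α) * β → ∀ p ∈ Set.Ioo (0 : ℝ) 1,
      0 < Filter.liminf (fun k : ℕ => (oneTypeMap α β)^[k] p) Filter.atTop) := by
  refine ⟨fun hab p hp => ?_, fun hab p hp => ?_⟩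
  · have hmaps : MapsTo (oneTypeMap α β) (Ici 0) (Ici 0) :=
      fun q hq => oneTypeMap_nonneg hα hβ.le hq
    refine tendsto_zero_of_le_comp (f := fun q => (1 - α) * (1 - exp (-(β * q))))
      (by fun_prop) (by simp) (fun q hq => mul_one_sub_exp_neg_lt (sub_pos.2 hα.2) hab hq)
      (fun k => hmaps.iterate k hp.1) (fun k => ?_)
    rw [Function.iterate_succ_apply']
    exact oneTypeMap_le hα hβ.le (hmaps.iterate k hp.1)
  · obtain ⟨c, hc, hmin⟩ := exists_min_le_mul_exp hab (by positivity : 0 < 4 * β)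
    refine liminf_iterate_pos hc (fun q hq => ⟨?_, oneTypeMap_le_one hα hβ.le hq.1.le⟩)
      (Ioo_subset_Ioc_self hp)
    simpa only [← mul_assoc] using (hmin q hq).trans (mul_exp_le_oneTypeMap hα hβ.le hq.1.le)
end

section
/- Let t(x) = g_{\alpha_2}(1 - e^{-\beta_2 x}) and \sigma = \inf_{x \in [0,\bar{p}_2]} \liminf_{n\to\infty} (\prod_{k=0}^{n-1} \psi(\beta_2 t^k(x)))^{1/n}. If \varphi_1 \sigma > 1, then for every M > 0 there exists \bar{k} \in \mathbb{N} with the following property: for every q^0 \in [0,\bar{p}_2] there is some k \le \bar{k} such that \prod_{j=0}^{k-1} \varphi_1 \psi(\beta_2 t^j(q^0)) > M. -/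
/-- `ψ(x) = (1 - e^{-x})/x`, with `ψ(0) = 1`. -/
noncomputable def psi (x : ℝ) : ℝ := if x = 0 then 1 else (1 - Real.exp (-x)) / x

/-- The one-type map for the strong species alone: `t(x) = g_{α₂}(1 - e^{-β₂ x})`. -/
noncomputable def tmap (α₂ β₂ : ℝ) (x : ℝ) : ℝ := g α₂ (1 - Real.exp (-(β₂ * x)))

/-- `σ = inf_{x ∈ [0,p̄₂]} liminf_n (∏_{k<n} ψ(β₂ tᵏ(x)))^{1/n}`. -/
noncomputable def sigma (α₂ β₂ : ℝ) : ℝ :=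
  sInf ((fun x => Filter.liminf
      (fun n : ℕ => (∏ k ∈ Finset.range n, psi (β₂ * (tmap α₂ β₂)^[k] x)) ^ (1 / (n : ℝ)))
      Filter.atTop) '' Set.Icc 0 (pbar α₂))

/-!
The product `∏_{j<n} φ₁ ψ(β₂ tʲ(q))` is `φ₁ⁿ` times the `n`-th power of the geometric mean of
the factors `ψ(β₂ tʲ(q))`, whose lower limit is at least `σ`. So `φ₁ σ > 1` makes the products
grow exponentially, and every `q` has some `k` with product above `M`. The products are
continuous in `q` on `[0, ∞)` (`ψ` is a difference quotient of `1 - e^{-x}`, and `g_α` becomes a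
quotient with nonvanishing denominator once its numerator is rationalized), so compactness of
`[0, p̄₂]` makes the choice of `k` uniformly bounded.
-/

open Set Filter Topology

lemma psi_eq_dslope : psi = dslope (fun x => 1 - Real.exp (-x)) 0 := by
  funext x
  rcases eq_or_ne x 0 with rfl | hx
  · have : HasDerivAt (fun x => 1 - Real.exp (-x)) 1 0 := by
      simpa using ((hasDerivAt_neg (0 : ℝ)).exp).const_sub 1
    simp [psi, dslope_same, this.deriv]
  · simp [psi, hx, dslope_of_ne _ hx, slope_def_field]

lemma continuous_psi : Continuous psi := by
  rw [psi_eq_dslope, ← continuousOn_univ]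
  exact (continuousOn_dslope univ_mem).2 ⟨by fun_prop, by fun_prop⟩

lemma psi_pos (x : ℝ) : 0 < psi x := by
  rcases lt_trichotomy x 0 with hx | rfl | hx
  · have : 1 < Real.exp (-x) := Real.one_lt_exp_iff.2 (neg_pos.2 hx)
    simpa [psi, hx.ne] using div_pos_of_neg_of_neg (by linarith) hx
  · simp [psi]
  · have : Real.exp (-x) < 1 := Real.exp_lt_one_iff.2 (neg_neg_of_pos hx)
    simpa [psi, hx.ne'] using div_pos (by linarith) hx

/-- `g α` with its numerator rationalized: on `[0, 1]`, `(1 - √D)(1 + √D) = 4(1-α)x(1-x)` for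
`D = 1 - 4(1-α)x(1-x)`, which cancels the `x²` in the denominator. -/
noncomputable def gRat (α x : ℝ) : ℝ :=
  8 * (1 - α) * x * (1 - x) ^ 3 / (1 + Real.sqrt (1 - 4 * (1 - α) * x * (1 - x))) ^ 3

lemma g_eq_gRat {α x : ℝ} (hα : α ∈ Ico 0 1) (hx : x ∈ Icc 0 1) : g α x = gRat α x := by
  rcases eq_or_ne x 0 with rfl | hx0
  · simp [g, gRat]
  have hD : 0 ≤ 1 - 4 * (1 - α) * x * (1 - x) := by
    nlinarith [sq_nonneg (2 * x - 1), mul_nonneg (mul_nonneg hα.1 hx.1) (sub_nonneg.2 hx.2)]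
  set s := Real.sqrt (1 - 4 * (1 - α) * x * (1 - x))
  have hs : (1 - s) * (1 + s) = 4 * (1 - α) * x * (1 - x) := by
    nlinarith [Real.sq_sqrt hD]
  have : 1 + s ≠ 0 := by positivity
  have : 1 - α ≠ 0 := by linarith [hα.2]
  rw [g, if_neg hx0, gRat]
  field_simp
  linear_combination
    (((1 - s) * (1 + s)) ^ 2 + (1 - s) * (1 + s) * (4 * (1 - α) * x * (1 - x))
      + (4 * (1 - α) * x * (1 - x)) ^ 2) * hs

lemma continuous_gRat (α : ℝ) : Continuous (gRat α) := by
  refine Continuous.div (by fun_prop) (by fun_prop) fun x => ?_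
  positivity

lemma continuousOn_g_s11 {α : ℝ} (hα : α ∈ Ico 0 1) : ContinuousOn (g α) (Icc 0 1) :=
  (continuous_gRat α).continuousOn.congr fun _ hx => g_eq_gRat hα hx

lemma g_nonneg {α x : ℝ} (hα : α ≤ 1) (hx : x ∈ Icc 0 1) : 0 ≤ g α x := by
  have hs : Real.sqrt (1 - 4 * (1 - α) * x * (1 - x)) ≤ 1 := by
    refine Real.sqrt_le_one.2 (sub_le_self _ ?_)
    have := mul_nonneg (sub_nonneg.2 hα) (mul_nonneg hx.1 (sub_nonneg.2 hx.2))
    nlinarith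
  unfold g
  split_ifs
  · rfl
  · exact div_nonneg (pow_nonneg (sub_nonneg.2 hs) 3) (by positivity)

lemma one_sub_exp_neg_mem_Icc {y : ℝ} (hy : 0 ≤ y) : 1 - Real.exp (-y) ∈ Icc 0 1 :=
  ⟨sub_nonneg.2 (Real.exp_le_one_iff.2 (neg_nonpos.2 hy)),
    sub_le_self _ (Real.exp_pos _).le⟩

lemma mapsTo_tmap {α β : ℝ} (hα : α ≤ 1) (hβ : 0 ≤ β) :
    MapsTo (tmap α β) (Ici 0) (Ici 0) :=
  fun _ hx => g_nonneg hα (one_sub_exp_neg_mem_Icc (mul_nonneg hβ hx))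

lemma continuousOn_tmap {α β : ℝ} (hα : α ∈ Ico 0 1) (hβ : 0 ≤ β) :
    ContinuousOn (tmap α β) (Ici 0) :=
  (continuousOn_g_s11 hα).comp (by fun_prop) fun _ hx =>
    one_sub_exp_neg_mem_Icc (mul_nonneg hβ hx)

noncomputable def liminfGeomMean (a : ℕ → ℝ) : ℝ :=
  liminf (fun n : ℕ => (∏ k ∈ Finset.range n, a k) ^ (1 / (n : ℝ))) atTop

/-- No boundedness is needed: in `ℝ`, `sSup` of a set unbounded above is `0`. -/
lemma Real.liminf_nonneg {ι : Type*} {f : Filter ι} {u : ι → ℝ} (hu : ∀ᶠ i in f, 0 ≤ u i) :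
    0 ≤ liminf u f :=
  Real.sSup_nonneg' ⟨0, hu, le_rfl⟩

lemma liminfGeomMean_nonneg {a : ℕ → ℝ} (ha : ∀ k, 0 ≤ a k) : 0 ≤ liminfGeomMean a :=
  Real.liminf_nonneg <| .of_forall fun _ =>
    Real.rpow_nonneg (Finset.prod_nonneg fun k _ => ha k) _

lemma tendsto_prod_const_mul_atTop_of_one_lt_mul_liminfGeomMean {a : ℕ → ℝ} {φ : ℝ}
    (ha : ∀ k, 0 ≤ a k) (h : 1 < φ * liminfGeomMean a) :
    Tendsto (fun n => ∏ k ∈ Finset.range n, φ * a k) atTop atTop := by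
  have hL := liminfGeomMean_nonneg ha
  have hφ : 0 < φ := pos_of_mul_pos_left (one_pos.trans h) hL
  obtain ⟨c, hφc, hcL⟩ := exists_between ((inv_lt_iff_one_lt_mul₀' hφ).2 h)
  have hc : 0 < c := (inv_pos.2 hφ).trans hφc
  have hprod : ∀ n, 0 ≤ ∏ k ∈ Finset.range n, a k := fun n => Finset.prod_nonneg fun k _ => ha k
  have hbdd : IsBoundedUnder (· ≥ ·) atTop
      fun n : ℕ => (∏ k ∈ Finset.range n, a k) ^ (1 / (n : ℝ)) :=
    isBoundedUnder_of ⟨0, fun n => Real.rpow_nonneg (hprod n) _⟩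
  refine tendsto_atTop_mono' atTop ?_
    (tendsto_pow_atTop_atTop_of_one_lt ((inv_lt_iff_one_lt_mul₀' hφ).1 hφc))
  filter_upwards [eventually_lt_of_lt_liminf hcL hbdd, eventually_ne_atTop 0] with n hn hn0
  rw [Finset.prod_mul_distrib, Finset.prod_const, Finset.card_range, mul_pow]
  gcongr
  calc c ^ n ≤ ((∏ k ∈ Finset.range n, a k) ^ (1 / (n : ℝ))) ^ n :=
        pow_le_pow_left₀ hc.le hn.le n
    _ = ∏ k ∈ Finset.range n, a k := by rw [one_div, Real.rpow_inv_natCast_pow (hprod n) hn0]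

lemma sigma_nonneg (α β : ℝ) : 0 ≤ sigma α β :=
  Real.sInf_nonneg <| by
    rintro _ ⟨x, -, rfl⟩
    exact liminfGeomMean_nonneg fun k => (psi_pos _).le

lemma sigma_le_liminfGeomMean {α β x : ℝ} (hx : x ∈ Icc 0 (pbar α)) :
    sigma α β ≤ liminfGeomMean fun k => psi (β * (tmap α β)^[k] x) :=
  csInf_le ⟨0, by rintro _ ⟨y, -, rfl⟩; exact liminfGeomMean_nonneg fun k => (psi_pos _).le⟩
    ⟨x, hx, rfl⟩

lemma IsCompact.exists_forall_exists_le_lt_of_continuousOn {X Y : Type*} [TopologicalSpace X]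
    [TopologicalSpace Y] [LinearOrder Y] [OrderClosedTopology Y] {K : Set X} (hK : IsCompact K)
    {F : ℕ → X → Y} (hF : ∀ n, ContinuousOn (F n) K) {M : Y} (h : ∀ x ∈ K, ∃ n, M < F n x) :
    ∃ N, ∀ x ∈ K, ∃ n ≤ N, M < F n x := by
  choose! n hn using h
  obtain ⟨t, -, hKt⟩ := hK.elim_nhdsWithin_subcover (fun x => {y | M < F (n x) y})
    fun x hx => Filter.Tendsto.eventually_const_lt (hn x hx) (hF (n x) x hx)
  refine ⟨t.sup n, fun y hy => ?_⟩
  obtain ⟨x, hxt, hxy⟩ := mem_iUnion₂.1 (hKt hy)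
  exact ⟨n x, Finset.le_sup hxt, hxy⟩

theorem stmt11_general (α₁ α₂ β₁ β₂ : ℝ)
    (hα₂ : α₂ ∈ Set.Ico (0 : ℝ) 1)
    (hβ₂ : 0 < β₂)
    (hσ : 1 < (1 - α₁) * β₁ * sigma α₂ β₂) :
    ∀ M : ℝ, 0 < M → ∃ kbar : ℕ, ∀ q0 ∈ Set.Icc (0 : ℝ) (pbar α₂),
      ∃ k ≤ kbar, M < ∏ j ∈ Finset.range k, (1 - α₁) * β₁ * psi (β₂ * (tmap α₂ β₂)^[j] q0) := by
  intro M _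
  have hφ : 0 ≤ (1 - α₁) * β₁ := (pos_of_mul_pos_left (one_pos.trans hσ) (sigma_nonneg _ _)).le
  have hiter := (continuousOn_tmap hα₂ hβ₂.le).iterate (mapsTo_tmap hα₂.2.le hβ₂.le)
  refine isCompact_Icc.exists_forall_exists_le_lt_of_continuousOn (fun n => ?_) fun q hq => ?_
  · refine (continuousOn_finsetProd _ fun j _ => ?_).mono Icc_subset_Ici_self
    exact continuousOn_const.mul (continuous_psi.comp_continuousOn
      (continuousOn_const.mul (hiter j)))
  · have hq' := hσ.trans_le (mul_le_mul_of_nonneg_left (sigma_le_liminfGeomMean hq) hφ)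
    exact (tendsto_prod_const_mul_atTop_of_one_lt_mul_liminfGeomMean (fun k => (psi_pos _).le)
      hq').eventually_gt_atTop M |>.exists

theorem stmt11 (α₁ α₂ β₁ β₂ : ℝ)
    (hα₁ : α₁ ∈ Set.Ico (0 : ℝ) 1) (hα₂ : α₂ ∈ Set.Ico (0 : ℝ) 1)
    (hβ₁ : 0 < β₁) (hβ₂ : 0 < β₂)
    (hσ : 1 < (1 - α₁) * β₁ * sigma α₂ β₂) :
    ∀ M : ℝ, 0 < M → ∃ kbar : ℕ, ∀ q0 ∈ Set.Icc (0 : ℝ) (pbar α₂),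
      ∃ k ≤ kbar, M < ∏ j ∈ Finset.range k, (1 - α₁) * β₁ * psi (β₂ * (tmap α₂ β₂)^[j] q0) :=
  stmt11_general α₁ α₂ β₁ β₂ hα₂ hβ₂ hσ
end
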